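/- arXiv:2003.05211 — 2 statements merged into one kernel-verified Lean document; each statement's English description precedes it below -/
import Mathlib

section
/- Let F be a (M,β,s₀)-Morse-non-degenerate 2π-periodic function with critical points θ̄₀ < θ̄₁ < … < θ̄_{2N}. Then for every 1 ≤ i ≤ 2N: (i) |F′(θ̄_i + θ)| ≥ (β/2)|θ| for all real θ with |θ| ≤ θ♯ := β s₀³/(6M); (ii) β s₀³/(6πM) ≤ 1; (iii) min over θ ∈ [θ̄_{i−1} + θ♯/2, θ̄_i − θ♯/2] of |F′(θ)| is at least β² s₀³/(32M). -/
/-!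
Cauchy's estimate on the strip bounds `F'''` on the real line by `6M/s₀³`, so the Taylor
remainder of `F'` at a real point `a` is at most `(3M/s₀³)(x - a)²`. At a critical point `F'`
vanishes and `|F''| ≥ β`, which gives (i) on `|x - a| ≤ θ♯ = β s₀³/(6M)`. Consequently distinct
critical points are more than `θ♯` apart, and the gaps `θ̄₁ - θ̄₀` and `θ̄_{2N} - θ̄₁`, which add up
to `2π`, give (ii). For (iii), take a minimiser of `|F'|` on the interval: within `θ♯` of an
endpoint, (i) applies; otherwise it is an interior local minimum of the real function `F'` at
which `F'` does not vanish (every zero of `F'` in `(-π, π]` is some `θ̄_j`), so `F'' = 0` there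
and `|F'| ≥ β`, which exceeds the bound because `θ♯ < π`.
-/

noncomputable section

open Complex Set

/-- The complex strip of half-width `s` (a fundamental domain of the complexified torus `𝕋_s`). -/
def Strip (s : ℝ) : Set ℂ := {z : ℂ | |z.im| < s}

/-- Data of a `(M,β,s₀)`-Morse-non-degenerate `2π`-periodic real-analytic function, together with
its `2N` non-degenerate critical points `θ 1 < … < θ (2N) = π` in `(-π,π]` (and `θ 0 = -π`,
the translate of the global maximum `θ (2N) = π`); odd indices are minima, even indices maxima,
and the critical values are pairwise separated by at least `β`. -/
structure MorseData (M β s₀ : ℝ) (N : ℕ) where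
  F : ℂ → ℂ
  θ : ℕ → ℝ
  hol : DifferentiableOn ℂ F (Strip s₀)
  per : ∀ z : ℂ, F (z + 2 * Real.pi) = F z
  realF : ∀ x : ℝ, (F (x : ℂ)).im = 0
  bdd : ∀ z ∈ Strip s₀, ‖F z‖ ≤ M
  lower : ∀ x : ℝ, β ≤ ‖deriv F (x : ℂ)‖ + ‖iteratedDeriv 2 F (x : ℂ)‖
  mono : ∀ i j : ℕ, i < j → j ≤ 2 * N → θ i < θ j
  first : θ 0 = -Real.pi
  last : θ (2 * N) = Real.pi
  crit : ∀ i ≤ 2 * N, deriv F ((θ i : ℝ) : ℂ) = 0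
  conv : ∀ i ≤ 2 * N, i % 2 = 1 → 0 < (iteratedDeriv 2 F ((θ i : ℝ) : ℂ)).re
  conc : ∀ i ≤ 2 * N, i % 2 = 0 → (iteratedDeriv 2 F ((θ i : ℝ) : ℂ)).re < 0
  sep : ∀ i j : ℕ, 1 ≤ i → i ≤ 2 * N → 1 ≤ j → j ≤ 2 * N → i ≠ j →
    β ≤ ‖F ((θ i : ℝ) : ℂ) - F ((θ j : ℝ) : ℂ)‖
  onlycrit : ∀ x : ℝ, -Real.pi < x → x ≤ Real.pi → deriv F ((x : ℝ) : ℂ) = 0 →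
    ∃ i, i ≤ 2 * N ∧ x = θ i

open Filter Topology

theorem isOpen_strip (s : ℝ) : IsOpen (Strip s) :=
  (continuous_abs.comp continuous_im).isOpen_preimage _ isOpen_Iio

theorem ofReal_mem_strip {s : ℝ} (hs : 0 < s) (x : ℝ) : (x : ℂ) ∈ Strip s := by
  simp [Strip, hs]

theorem closedBall_subset_strip {r s : ℝ} (hrs : r < s) (x : ℝ) :
    Metric.closedBall (x : ℂ) r ⊆ Strip s := fun z hz =>
  calc |z.im| = |(z - x).im| := by simp
    _ ≤ ‖z - x‖ := abs_im_le_norm _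
    _ ≤ r := mem_closedBall_iff_norm.mp hz
    _ < s := hrs

theorem norm_iteratedDeriv_le_of_forall_mem_strip_norm_le {F : ℂ → ℂ} {s M : ℝ} (hs : 0 < s)
    (hF : DifferentiableOn ℂ F (Strip s)) (hM : ∀ z ∈ Strip s, ‖F z‖ ≤ M) (n : ℕ) (x : ℝ) :
    ‖iteratedDeriv n F x‖ ≤ n.factorial * M / s ^ n := by
  have hball : ∀ r ∈ Ioo 0 s, ‖iteratedDeriv n F x‖ ≤ n.factorial * M / r ^ n := fun r hr =>
    Complex.norm_iteratedDeriv_le_of_forall_mem_sphere_norm_le n hr.1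
      (hF.diffContOnCl_ball (closedBall_subset_strip hr.2 x))
      fun z hz => hM z (closedBall_subset_strip hr.2 x (Metric.sphere_subset_closedBall hz))
  have hlim : Tendsto (fun r : ℝ => n.factorial * M / r ^ n) (𝓝[<] s)
      (𝓝 (n.factorial * M / s ^ n)) :=
    (tendsto_const_nhds.div ((continuous_pow n).tendsto s) (by positivity)).mono_left
      nhdsWithin_le_nhds
  exact ge_of_tendsto hlim (mem_of_superset (Ioo_mem_nhdsLT hs) hball)

theorem norm_sub_sub_smul_le_of_norm_deriv_sub_le {E : Type*} [NormedAddCommGroup E]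
    [NormedSpace ℝ E] {f f' : ℝ → E} {a K : ℝ} (hf : ∀ t, HasDerivAt f (f' t) t)
    (hf' : ∀ t, ‖f' t - f' a‖ ≤ K * |t - a|) (x : ℝ) :
    ‖f x - f a - (x - a) • f' a‖ ≤ K * (x - a) ^ 2 / 2 := by
  wlog hax : a ≤ x generalizing f f' a x
  · have := this (f := fun t => f (-t)) (f' := fun t => -f' (-t)) (a := -a) (x := -x)
      (fun t => by simpa [Function.comp_def] using (hf (-t)).scomp t (hasDerivAt_neg t))
      (fun t => calc
        _ = ‖f' (-t) - f' a‖ := by rw [neg_neg, neg_sub_neg, norm_sub_rev]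
        _ ≤ K * |-t - a| := hf' (-t)
        _ = K * |t - -a| := by rw [← abs_neg]; ring_nf)
      (by linarith)
    rwa [neg_neg, neg_neg, smul_neg, ← neg_smul, neg_sub, sub_neg_eq_add, neg_add_eq_sub,
      show (-x - -a) ^ 2 = (x - a) ^ 2 by ring] at this
  have hg : ∀ t, HasDerivAt (fun t => f t - f a - (t - a) • f' a) (f' t - f' a) t := fun t =>
    (((hf t).sub_const (f a)).sub
      (((hasDerivAt_id' t).sub_const a).smul_const (f' a))).congr_deriv (by simp)
  have hB : ∀ t, HasDerivAt (fun t => K * (t - a) ^ 2 / 2) (K * (t - a)) t := fun t =>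
    ((((hasDerivAt_id' t).sub_const a).pow 2).const_mul K |>.div_const 2).congr_deriv
      (by norm_num; ring)
  refine image_norm_le_of_norm_deriv_right_le_deriv_boundary
    (fun t _ => (hg t).continuousAt.continuousWithinAt) (fun t _ => (hg t).hasDerivWithinAt)
    (by simp) hB (fun t ht => ?_) ⟨hax, le_rfl⟩
  simpa [abs_of_nonneg (sub_nonneg.mpr ht.1)] using hf' t

theorem mul_abs_sub_le_norm_of_norm_deriv_sub_le {E : Type*} [NormedAddCommGroup E]
    [NormedSpace ℝ E] {f f' : ℝ → E} {a K β : ℝ} (hK : 0 < K) (hf : ∀ t, HasDerivAt f (f' t) t)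
    (hf' : ∀ t, ‖f' t - f' a‖ ≤ K * |t - a|) (hfa : f a = 0) (hβ : β ≤ ‖f' a‖) {x : ℝ}
    (hx : |x - a| ≤ β / K) :
    β / 2 * |x - a| ≤ ‖f x‖ := by
  have htaylor := norm_sub_sub_smul_le_of_norm_deriv_sub_le hf hf' x
  rw [hfa, sub_zero] at htaylor
  have hlin : β * |x - a| ≤ ‖(x - a) • f' a‖ := by
    rw [norm_smul, Real.norm_eq_abs, mul_comm β]
    exact mul_le_mul_of_nonneg_left hβ (abs_nonneg _)
  have hquad : K * (x - a) ^ 2 ≤ β * |x - a| := by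
    rw [← sq_abs, sq, ← mul_assoc]
    exact mul_le_mul_of_nonneg_right ((le_div_iff₀' hK).mp hx) (abs_nonneg _)
  linarith [norm_sub_norm_le ((x - a) • f' a) (f x), norm_sub_rev (f x) ((x - a) • f' a)]

theorem im_eq_zero_of_hasDerivAt {G : ℂ → ℂ} {g : ℂ} {x : ℝ} (hG : ∀ y : ℝ, (G y).im = 0)
    (h : HasDerivAt G g x) : g.im = 0 := by
  have him : HasDerivAt (fun y : ℝ => (G y).im) g.im x :=
    imCLM.hasFDerivAt.comp_hasDerivAt x h.comp_ofReal
  simp only [hG] at him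
  exact him.unique (hasDerivAt_const x 0)

theorem IsLocalMin.hasDerivAt_eq_zero_of_abs {f : ℝ → ℝ} {f' x : ℝ}
    (hmin : IsLocalMin (fun y => |f y|) x) (hf : HasDerivAt f f' x) (hx : f x ≠ 0) : f' = 0 := by
  have hsq : IsLocalMin (fun y => f y ^ 2) x := by
    filter_upwards [hmin] with y hy
    exact sq_le_sq.mpr hy
  have := hsq.hasDerivAt_eq_zero (hf.pow 2)
  simpa [hx] using this

namespace MorseData

variable {M β s₀ : ℝ} {N : ℕ} (md : MorseData M β s₀ N)

theorem θ_strictMonoOn : StrictMonoOn md.θ (Iic (2 * N)) := fun _ _ _ hj hij => md.mono _ _ hij hj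

theorem hasDerivAt_iteratedDeriv (hs : 0 < s₀) (n : ℕ) (x : ℝ) :
    HasDerivAt (iteratedDeriv n md.F) (iteratedDeriv (n + 1) md.F x) x := by
  rw [iteratedDeriv_succ, iteratedDeriv_eq_iterate]
  exact ((md.hol.analyticOnNhd (isOpen_strip s₀)).iterated_deriv n x
    (ofReal_mem_strip hs x)).differentiableAt.hasDerivAt

theorem hasDerivAt_deriv (hs : 0 < s₀) (x : ℝ) :
    HasDerivAt (fun y : ℝ => deriv md.F y) (iteratedDeriv 2 md.F x) x := by
  simpa using (md.hasDerivAt_iteratedDeriv hs 1 x).comp_ofReal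

theorem im_iteratedDeriv (hs : 0 < s₀) (n : ℕ) (x : ℝ) : (iteratedDeriv n md.F x).im = 0 := by
  induction n generalizing x with
  | zero => exact md.realF x
  | succ n ih => exact im_eq_zero_of_hasDerivAt ih (md.hasDerivAt_iteratedDeriv hs n x)

theorem norm_iteratedDeriv_two_sub_le (hs : 0 < s₀) (a t : ℝ) :
    ‖iteratedDeriv 2 md.F t - iteratedDeriv 2 md.F a‖ ≤ 6 * M / s₀ ^ 3 * |t - a| := by
  have hbound (y : ℝ) : ‖iteratedDeriv 3 md.F y‖ ≤ 6 * M / s₀ ^ 3 := by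
    simpa [Nat.factorial] using
      norm_iteratedDeriv_le_of_forall_mem_strip_norm_le hs md.hol md.bdd 3 y
  simpa using convex_univ.norm_image_sub_le_of_norm_hasDerivWithin_le
    (fun y _ => ((md.hasDerivAt_iteratedDeriv hs 2 y).comp_ofReal).hasDerivWithinAt)
    (fun y _ => hbound y) (mem_univ a) (mem_univ t)

theorem mul_abs_sub_le_norm_deriv (hM : 0 < M) (hs : 0 < s₀) {j : ℕ} (hj : j ≤ 2 * N) {x : ℝ}
    (hx : |x - md.θ j| ≤ β * s₀ ^ 3 / (6 * M)) :
    β / 2 * |x - md.θ j| ≤ ‖deriv md.F x‖ := by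
  have hcrit := md.crit j hj
  refine mul_abs_sub_le_norm_of_norm_deriv_sub_le (by positivity) (md.hasDerivAt_deriv hs)
    (md.norm_iteratedDeriv_two_sub_le hs _) hcrit ?_ ?_
  · simpa [hcrit] using md.lower (md.θ j)
  · rwa [div_div_eq_mul_div]

theorem lt_abs_θ_sub_θ (hM : 0 < M) (hβ : 0 < β) (hs : 0 < s₀) {j k : ℕ} (hj : j ≤ 2 * N)
    (hk : k ≤ 2 * N) (hjk : j ≠ k) :
    β * s₀ ^ 3 / (6 * M) < |md.θ k - md.θ j| := by
  by_contra! hle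
  have h := md.mul_abs_sub_le_norm_deriv hM hs hj hle
  rw [md.crit k hk, norm_zero] at h
  have hne : md.θ k - md.θ j ≠ 0 :=
    sub_ne_zero.mpr fun h => hjk (md.θ_strictMonoOn.injOn hk hj h).symm
  have := abs_pos.mpr hne
  nlinarith

theorem mul_pow_div_lt_pi (md : MorseData M β s₀ N) (hM : 0 < M) (hβ : 0 < β) (hs : 0 < s₀)
    (hN : 0 < N) :
    β * s₀ ^ 3 / (6 * M) < Real.pi := by
  have h₀ := md.lt_abs_θ_sub_θ hM hβ hs (j := 0) (k := 1) (by omega) (by omega) (by omega)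
  have h₁ := md.lt_abs_θ_sub_θ hM hβ hs (j := 1) (k := 2 * N) (by omega) le_rfl (by omega)
  rw [abs_of_pos (sub_pos.mpr (md.mono 0 1 (by omega) (by omega)))] at h₀
  rw [abs_of_pos (sub_pos.mpr (md.mono 1 (2 * N) (by omega) le_rfl))] at h₁
  linarith [md.first, md.last]

theorem deriv_ne_zero_of_mem_Ioo {k : ℕ} (hk : k < 2 * N) {x : ℝ}
    (hx : x ∈ Ioo (md.θ k) (md.θ (k + 1))) : deriv md.F x ≠ 0 := by
  intro hcrit
  have h₀ : md.θ 0 ≤ md.θ k :=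
    md.θ_strictMonoOn.monotoneOn (mem_Iic.mpr (by omega)) (mem_Iic.mpr (by omega)) (Nat.zero_le k)
  have h₁ : md.θ (k + 1) ≤ md.θ (2 * N) :=
    md.θ_strictMonoOn.monotoneOn (mem_Iic.mpr (by omega)) (mem_Iic.mpr le_rfl) hk
  obtain ⟨j, hj, rfl⟩ := md.onlycrit x (by linarith [md.first, hx.1]) (by linarith [md.last, hx.2])
    hcrit
  have hkj := (md.θ_strictMonoOn.lt_iff_lt (mem_Iic.mpr (by omega)) (mem_Iic.mpr hj)).mp hx.1
  have hjk := (md.θ_strictMonoOn.lt_iff_lt (mem_Iic.mpr hj) (mem_Iic.mpr (by omega))).mp hx.2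
  omega

theorem le_norm_deriv_of_isLocalMin (hs : 0 < s₀) {x : ℝ} (hx : deriv md.F x ≠ 0)
    (hmin : IsLocalMin (fun y : ℝ => ‖deriv md.F y‖) x) : β ≤ ‖deriv md.F x‖ := by
  have hnorm (y : ℝ) : ‖deriv md.F y‖ = |(deriv md.F y).re| :=
    (abs_re_eq_norm.mpr (by simpa using md.im_iteratedDeriv hs 1 y)).symm
  simp only [hnorm] at hmin
  have hre : (iteratedDeriv 2 md.F x).re = 0 :=
    hmin.hasDerivAt_eq_zero_of_abs
      (by simpa using (md.hasDerivAt_iteratedDeriv hs 1 x).real_of_complex)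
      fun h => hx (Complex.ext h (by simpa using md.im_iteratedDeriv hs 1 x))
  have h₂ : iteratedDeriv 2 md.F x = 0 := Complex.ext hre (md.im_iteratedDeriv hs 2 x)
  simpa [h₂] using md.lower x

theorem le_norm_deriv_of_mem_Icc (hM : 0 < M) (hβ : 0 < β) (hs : 0 < s₀) (hN : 0 < N) {k : ℕ}
    (hk : k < 2 * N) {x : ℝ}
    (hx : x ∈ Icc (md.θ k + β * s₀ ^ 3 / (6 * M) / 2) (md.θ (k + 1) - β * s₀ ^ 3 / (6 * M) / 2)) :
    β ^ 2 * s₀ ^ 3 / (32 * M) ≤ ‖deriv md.F x‖ := by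
  set T := β * s₀ ^ 3 / (6 * M) with hT
  have hT₀ : 0 < T := by positivity
  have hc : β ^ 2 * s₀ ^ 3 / (32 * M) = 3 / 16 * β * T := by
    rw [hT]; field_simp; ring
  have hcont : Continuous fun y : ℝ => ‖deriv md.F y‖ :=
    continuous_iff_continuousAt.mpr fun y => (md.hasDerivAt_deriv hs y).continuousAt.norm
  obtain ⟨x₀, hx₀, hmin⟩ := isCompact_Icc.exists_isMinOn ⟨x, hx⟩ hcont.continuousOn
  refine le_trans ?_ (hmin hx)
  have hnear {j : ℕ} (hj : j ≤ 2 * N) (h₁ : T / 2 ≤ |x₀ - md.θ j|) (h₂ : |x₀ - md.θ j| ≤ T) :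
      β ^ 2 * s₀ ^ 3 / (32 * M) ≤ ‖deriv md.F x₀‖ :=
    calc β ^ 2 * s₀ ^ 3 / (32 * M) ≤ β / 2 * (T / 2) := by rw [hc]; nlinarith [mul_pos hβ hT₀]
      _ ≤ β / 2 * |x₀ - md.θ j| := by gcongr
      _ ≤ ‖deriv md.F x₀‖ := md.mul_abs_sub_le_norm_deriv hM hs hj h₂
  by_cases hl : x₀ ≤ md.θ k + T
  · exact hnear hk.le (by rw [abs_of_pos (by linarith [hx₀.1])]; linarith [hx₀.1])
      (by rw [abs_of_pos (by linarith [hx₀.1])]; linarith)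
  by_cases hr : md.θ (k + 1) - T ≤ x₀
  · exact hnear hk (by rw [abs_of_neg (by linarith [hx₀.2])]; linarith [hx₀.2])
      (by rw [abs_of_neg (by linarith [hx₀.2])]; linarith)
  have hloc : IsLocalMin (fun y : ℝ => ‖deriv md.F y‖) x₀ :=
    hmin.isLocalMin (Icc_mem_nhds (by linarith) (by linarith))
  have hβle := md.le_norm_deriv_of_isLocalMin hs
    (md.deriv_ne_zero_of_mem_Ioo hk ⟨by linarith, by linarith⟩) hloc
  have hTπ := md.mul_pow_div_lt_pi hM hβ hs hN
  rw [hc]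
  nlinarith [Real.pi_lt_d2]

end MorseData

/-- Lemma `parcoavventura`: quantitative behavior of `F'` near and away from
the critical points of a `(M,β,s₀)`-Morse-non-degenerate potential. -/
theorem statement_2 (M β s₀ : ℝ) (N : ℕ)
    (hM : 0 < M) (hβ : 0 < β) (hs : 0 < s₀) (hN : 0 < N)
    (md : MorseData M β s₀ N) :
    (∀ i : ℕ, 1 ≤ i → i ≤ 2 * N → ∀ θ : ℝ, |θ| ≤ β * s₀ ^ 3 / (6 * M) →
      β / 2 * |θ| ≤ ‖deriv md.F ((md.θ i + θ : ℝ) : ℂ)‖) ∧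
    β * s₀ ^ 3 / (6 * Real.pi * M) ≤ 1 ∧
    (∀ i : ℕ, 1 ≤ i → i ≤ 2 * N →
      ∀ x ∈ Set.Icc (md.θ (i - 1) + β * s₀ ^ 3 / (6 * M) / 2)
        (md.θ i - β * s₀ ^ 3 / (6 * M) / 2),
        β ^ 2 * s₀ ^ 3 / (32 * M) ≤ ‖deriv md.F ((x : ℝ) : ℂ)‖) := by
  refine ⟨fun i _ hi θ hθ => ?_, ?_, fun i hi₁ hi₂ x hx => ?_⟩
  · simpa using md.mul_abs_sub_le_norm_deriv hM hs hi (x := md.θ i + θ) (by simpa using hθ)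
  · rw [div_le_one (by positivity), mul_right_comm]
    exact ((div_lt_iff₀ (by positivity)).mp (md.mul_pow_div_lt_pi hM hβ hs hN)).le.trans
      (by linarith)
  · obtain ⟨k, rfl⟩ := Nat.exists_eq_add_of_le' hi₁
    exact md.le_norm_deriv_of_mem_Icc (k := k) hM hβ hs hN (by omega) (by simpa using hx)
end
end

section
/- Let R, r > 0 and let g(z) be holomorphic on the complex r-neighborhood [0,R]_r of the real interval [0,R]. If g is even near 0 (i.e. g(z) = g(−z) for all z in a neighborhood of 0), then there exists a function G(v), holomorphic on the complex r²-neighborhood [0,R²]_{r²} of [0,R²], such that G(z²) = g(z) for all z ∈ [0,R]_r. -/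
/-!
Take `G w = g (√w)` with the principal square root. As `Re √w ≥ 0`, for `u ≥ 0` we have
`|√w - √u|² ≤ |√w - √u| |√w + √u| = |w - u|`, so `√` maps the `r²`-neighbourhood of `[0, R²]`
into the `r`-neighbourhood of `[0, R]`, and `G` is holomorphic off the negative real axis.
A point of either neighbourhood with `Re ≤ 0` is closer to `0` than to any point of the interval,
so the rest of the argument happens in the discs `|z| < r` and `|w| < r²`. By the identity
theorem `g` is even on the first disc; hence on the second `G w = g (i √(-w))`, which is
holomorphic off the positive real axis, and `0` is a removable singularity since `G` is
continuous there.
-/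

noncomputable section

open Complex Set

/-- Complex `ρ`-neighborhood of the closed real interval `[a,b]`. -/
def IccNbhd (a b ρ : ℝ) : Set ℂ :=
  {z : ℂ | ∃ y : ℝ, y ∈ Set.Icc a b ∧ ‖z - (y : ℂ)‖ < ρ}

open Filter Topology Metric

lemma isOpen_iccNbhd (a b ρ : ℝ) : IsOpen (IccNbhd a b ρ) := by
  have : IccNbhd a b ρ = ⋃ y ∈ Icc a b, ball (y : ℂ) ρ := by
    ext z; simp [IccNbhd, dist_eq]
  rw [this]
  exact isOpen_biUnion fun _ _ => isOpen_ball

lemma ball_subset_iccNbhd {a b ρ : ℝ} (h : (0 : ℝ) ∈ Icc a b) :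
    ball (0 : ℂ) ρ ⊆ IccNbhd a b ρ :=
  fun z hz => ⟨0, h, by simpa using hz⟩

lemma norm_le_norm_sub_ofReal {z : ℂ} {u : ℝ} (hz : z.re ≤ 0) (hu : 0 ≤ u) :
    ‖z‖ ≤ ‖z - u‖ := by
  rw [← sq_le_sq₀ (norm_nonneg _) (norm_nonneg _), Complex.sq_norm, Complex.sq_norm,
    normSq_apply, normSq_apply]
  simp only [sub_re, ofReal_re, sub_im, ofReal_im, sub_zero]
  nlinarith

lemma norm_lt_of_mem_iccNbhd_of_re_nonpos {a b ρ : ℝ} {z : ℂ} (ha : 0 ≤ a)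
    (hz : z ∈ IccNbhd a b ρ) (hre : z.re ≤ 0) : ‖z‖ < ρ := by
  obtain ⟨u, hu, hzu⟩ := hz
  exact (norm_le_norm_sub_ofReal hre (ha.trans hu.1)).trans_lt hzu

lemma norm_sub_ofReal_le_norm_add_ofReal {s : ℂ} {c : ℝ} (hs : 0 ≤ s.re) (hc : 0 ≤ c) :
    ‖s - c‖ ≤ ‖s + c‖ := by
  rw [← sq_le_sq₀ (norm_nonneg _) (norm_nonneg _), Complex.sq_norm, Complex.sq_norm,
    normSq_apply, normSq_apply]
  simp only [sub_re, add_re, ofReal_re, sub_im, add_im, ofReal_im, sub_zero, add_zero]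
  nlinarith

lemma cpow_inv_two_re_nonneg (w : ℂ) : 0 ≤ (w ^ (2⁻¹ : ℂ)).re := by
  rw [cpow_inv_two_re]
  exact Real.sqrt_nonneg _

lemma sq_cpow_inv_two_of_re_pos {z : ℂ} (hz : 0 < z.re) : (z ^ 2) ^ (2⁻¹ : ℂ) = z := by
  have hre := cpow_inv_two_re_nonneg (z ^ 2)
  rcases sq_eq_sq_iff_eq_or_eq_neg.1 (cpow_ofNat_inv_pow (z ^ 2) 2) with h | h
  · exact h
  · rw [h, neg_re] at hre; linarith

lemma cpow_inv_two_mem_ball {r : ℝ} {w : ℂ} (hr : 0 ≤ r) (hw : w ∈ ball (0 : ℂ) (r ^ 2)) :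
    w ^ (2⁻¹ : ℂ) ∈ ball (0 : ℂ) r := by
  rw [mem_ball_zero_iff] at hw ⊢
  refine lt_of_pow_lt_pow_left₀ 2 hr ?_
  rwa [← norm_pow, cpow_ofNat_inv_pow]

lemma cpow_inv_two_mem_iccNbhd {a b ρ : ℝ} {w : ℂ} (hb : 0 ≤ b) (hρ : 0 ≤ ρ)
    (hw : w ∈ IccNbhd (a ^ 2) (b ^ 2) (ρ ^ 2)) : w ^ (2⁻¹ : ℂ) ∈ IccNbhd a b ρ := by
  obtain ⟨u, ⟨hau, hub⟩, hwu⟩ := hw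
  set s := w ^ (2⁻¹ : ℂ)
  have hu : 0 ≤ u := (sq_nonneg a).trans hau
  refine ⟨√u, ⟨Real.le_sqrt_of_sq_le hau, (Real.sqrt_le_sqrt hub).trans_eq (Real.sqrt_sq hb)⟩, ?_⟩
  have hsqrt : ((√u : ℝ) : ℂ) ^ 2 = u := by rw [← ofReal_pow, Real.sq_sqrt hu]
  have hfac : (s - √u) * (s + √u) = w - u := by
    linear_combination cpow_ofNat_inv_pow w 2 - hsqrt
  have hle : ‖s - √u‖ ≤ ‖s + √u‖ :=
    norm_sub_ofReal_le_norm_add_ofReal (cpow_inv_two_re_nonneg w) (Real.sqrt_nonneg u)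
  refine lt_of_pow_lt_pow_left₀ 2 hρ ?_
  calc ‖s - √u‖ ^ 2 ≤ ‖s - √u‖ * ‖s + √u‖ := by
        rw [sq]; exact mul_le_mul_of_nonneg_left hle (norm_nonneg _)
    _ = ‖w - u‖ := by rw [← norm_mul, hfac]
    _ < ρ ^ 2 := hwu

section Even

variable {g : ℂ → ℂ} {r : ℝ}

lemma even_on_ball_of_eventually_even (hg : DifferentiableOn ℂ g (ball 0 r))
    (heven : ∀ᶠ z in 𝓝 0, g (-z) = g z) : ∀ z ∈ ball (0 : ℂ) r, g (-z) = g z := by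
  intro z hz
  have hneg : DifferentiableOn ℂ (fun z => g (-z)) (ball 0 r) :=
    hg.comp differentiable_neg.differentiableOn fun w hw => by simpa using hw
  exact (hneg.analyticOnNhd isOpen_ball).eqOn_of_preconnected_of_eventuallyEq
    (hg.analyticOnNhd isOpen_ball) (convex_ball 0 r).isPreconnected
    (mem_ball_self (nonempty_ball.1 ⟨z, hz⟩)) heven hz

lemma apply_eq_of_sq_eq (heven : ∀ z ∈ ball (0 : ℂ) r, g (-z) = g z) {z t : ℂ}
    (hz : z ∈ ball (0 : ℂ) r) (h : z ^ 2 = t ^ 2) : g z = g t := by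
  rcases sq_eq_sq_iff_eq_or_eq_neg.1 h with rfl | h
  · rfl
  · obtain rfl : t = -z := by rw [h, neg_neg]
    exact (heven z hz).symm

lemma differentiableOn_comp_cpow_inv_two (hr : 0 < r) (hg : DifferentiableOn ℂ g (ball 0 r))
    (heven : ∀ z ∈ ball (0 : ℂ) r, g (-z) = g z) :
    DifferentiableOn ℂ (fun w => g (w ^ (2⁻¹ : ℂ))) (ball 0 (r ^ 2)) := by
  have hgAt : ∀ z ∈ ball (0 : ℂ) r, DifferentiableAt ℂ g z := fun z hz =>
    hg.differentiableAt (isOpen_ball.mem_nhds hz)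
  have hoff : ∀ w ∈ ball (0 : ℂ) (r ^ 2) \ {0},
      DifferentiableAt ℂ (fun w => g (w ^ (2⁻¹ : ℂ))) w := by
    rintro w ⟨hw, hw0⟩
    rcases mem_slitPlane_or_neg_mem_slitPlane hw0 with hslit | hslit
    · exact (hgAt _ (cpow_inv_two_mem_ball hr.le hw)).comp w
        (differentiableAt_id.cpow_const hslit)
    · have hmem : I * (-w) ^ (2⁻¹ : ℂ) ∈ ball (0 : ℂ) r := by
        simpa using cpow_inv_two_mem_ball hr.le (w := -w) (by simpa using hw)
      refine ((hgAt _ hmem).comp w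
        ((differentiableAt_id.neg.cpow_const hslit).const_mul I)).congr_of_eventuallyEq ?_
      filter_upwards [isOpen_ball.mem_nhds hw] with v hv
      refine apply_eq_of_sq_eq heven (cpow_inv_two_mem_ball hr.le hv) ?_
      rw [mul_pow, I_sq, cpow_ofNat_inv_pow, cpow_ofNat_inv_pow]
      simp
  have hcont : ContinuousAt (fun w => g (w ^ (2⁻¹ : ℂ))) 0 := by
    have hsqrt : ContinuousAt (fun w : ℂ => w ^ (2⁻¹ : ℂ)) 0 :=
      continuousAt_cpow_const_of_re_pos (Or.inl (by simp)) (by norm_num)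
    refine ContinuousAt.comp (g := g) ?_ hsqrt
    rw [zero_cpow (by norm_num)]
    exact (hgAt 0 (mem_ball_self hr)).continuousAt
  exact (differentiableOn_compl_singleton_and_continuousAt_iff
    (ball_mem_nhds 0 (by positivity))).1 ⟨fun w hw => (hoff w hw).differentiableWithinAt, hcont⟩

end Even

/-- Lemma `geronimo`: an even holomorphic function `g` on the complex
`r`-neighborhood of `[0,R]` is of the form `g(z) = G(z²)` for a holomorphic function `G`
on the complex `r²`-neighborhood of `[0,R²]`. -/
theorem statement_12 (R r : ℝ) (hR : 0 < R) (hr : 0 < r) (g : ℂ → ℂ)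
    (hg : DifferentiableOn ℂ g (IccNbhd 0 R r))
    (heven : ∃ ε > 0, ∀ z : ℂ, ‖z‖ < ε → g z = g (-z)) :
    ∃ G : ℂ → ℂ,
      DifferentiableOn ℂ G (IccNbhd 0 (R ^ 2) (r ^ 2)) ∧
      ∀ z ∈ IccNbhd 0 R r, G (z ^ 2) = g z := by
  obtain ⟨ε, hε, he⟩ := heven
  have hball : ball (0 : ℂ) r ⊆ IccNbhd 0 R r := ball_subset_iccNbhd ⟨le_rfl, hR.le⟩
  have heven' : ∀ z ∈ ball (0 : ℂ) r, g (-z) = g z :=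
    even_on_ball_of_eventually_even (hg.mono hball) <|
      eventually_of_mem (ball_mem_nhds 0 hε) fun z hz => (he z (by simpa using hz)).symm
  have hG₀ := differentiableOn_comp_cpow_inv_two hr (hg.mono hball) heven'
  refine ⟨fun w => g (w ^ (2⁻¹ : ℂ)), fun w hw => ?_, fun z hz => ?_⟩
  · by_cases hslit : w ∈ slitPlane
    · have hmem := cpow_inv_two_mem_iccNbhd (a := 0) hR.le hr.le (by simpa using hw)
      exact ((hg.differentiableAt ((isOpen_iccNbhd _ _ _).mem_nhds hmem)).comp w
        (differentiableAt_id.cpow_const hslit)).differentiableWithinAt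
    · have hre : w.re ≤ 0 := not_lt.1 fun h => hslit (Or.inl h)
      have hw₀ : w ∈ ball (0 : ℂ) (r ^ 2) :=
        mem_ball_zero_iff.2 (norm_lt_of_mem_iccNbhd_of_re_nonpos le_rfl hw hre)
      exact (hG₀.differentiableAt (isOpen_ball.mem_nhds hw₀)).differentiableWithinAt
  · by_cases hzr : z ∈ ball (0 : ℂ) r
    · exact (apply_eq_of_sq_eq heven' hzr (cpow_ofNat_inv_pow _ 2).symm).symm
    · have hre : 0 < z.re := not_le.1 fun h =>
        hzr (mem_ball_zero_iff.2 (norm_lt_of_mem_iccNbhd_of_re_nonpos le_rfl hz h))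
      simp only [sq_cpow_inv_two_of_re_pos hre]
end
end
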